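/- Let n ≥ 1 be an integer, ℓ a positive even integer, and 0 < α < ℓ. Then inf_{r > 0} r^α W(r) / (1 − e^{−r})^α > 0. -/

import Mathlib

open MeasureTheory

/-- `W(r) = ∫_{|y| > r} sin^ℓ(y₁)/|y|^{n+α} dy` on `ℝⁿ`. -/
noncomputable def W (n : ℕ) (hn : 0 < n) (ℓ : ℕ) (α : ℝ) (r : ℝ) : ℝ :=
  ∫ y in {y : EuclideanSpace ℝ (Fin n) | r < ‖y‖},
    Real.sin (y ⟨0, hn⟩) ^ ℓ / ‖y‖ ^ ((n : ℝ) + α)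


open Real ENNReal

lemma aux_sin {ℓ : ℕ} (he : Even ℓ) {k : ℕ} {t : ℝ}
    (ht : t ∈ Set.Icc ((k:ℝ)*π + π/4) ((k:ℝ)*π + 3*π/4)) :
    (1/2:ℝ)^ℓ ≤ Real.sin t ^ ℓ := by
  obtain ⟨h1, h2⟩ := ht
  set u : ℝ := t - ((k:ℝ)*π + π/2) with hu
  have hpi := Real.pi_le_four
  have hpi0 := Real.pi_pos
  have hu1 : |u| ≤ 1 := by
    rw [abs_le]; constructor <;> [skip; skip] <;> simp only [hu] <;> nlinarith
  have hst : Real.sin t = (-1)^k * Real.cos u := by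
    have : t = (π/2 + u) + (k:ℕ) * π := by simp [hu]; ring
    rw [this, Real.sin_add_nat_mul_pi, Real.sin_add, Real.sin_pi_div_two, Real.cos_pi_div_two]; ring
  have habs : (1/2:ℝ) ≤ |Real.sin t| := by
    rw [hst, abs_mul, abs_pow, abs_neg, abs_one, one_pow, one_mul]
    have := Real.one_sub_sq_div_two_le_cos (x := u)
    have h3 : (1/2:ℝ) ≤ Real.cos u := by nlinarith [abs_nonneg u, sq_abs u]
    calc (1/2:ℝ) ≤ Real.cos u := h3
      _ ≤ |Real.cos u| := le_abs_self _
  calc (1/2:ℝ)^ℓ ≤ |Real.sin t|^ℓ := pow_le_pow_left₀ (by norm_num) habs ℓ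
    _ = Real.sin t ^ ℓ := he.pow_abs _

lemma aux_meas (n : ℕ) (hn : 0 < n) (ℓ : ℕ) (α : ℝ) :
    Measurable (fun y : EuclideanSpace ℝ (Fin n) =>
      Real.sin (y ⟨0, hn⟩) ^ ℓ / ‖y‖ ^ ((n : ℝ) + α)) := by
  apply Measurable.div
  · exact ((Real.measurable_sin.comp
      ((measurable_pi_apply (⟨0,hn⟩ : Fin n)).comp
        (MeasurableEquiv.toLp 2 (Fin n → ℝ)).symm.measurable)).pow_const ℓ)
  · fun_prop

lemma aux_nonneg (n : ℕ) (hn : 0 < n) {ℓ : ℕ} (he : Even ℓ) (α : ℝ)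
    (y : EuclideanSpace ℝ (Fin n)) :
    0 ≤ Real.sin (y ⟨0, hn⟩) ^ ℓ / ‖y‖ ^ ((n : ℝ) + α) :=
  div_nonneg (he.pow_nonneg _) (Real.rpow_nonneg (norm_nonneg _) _)

lemma aux_int (n : ℕ) (hn : 0 < n) (ℓ : ℕ) {α : ℝ} (hα : 0 < α) {r : ℝ} (hr : 0 < r) :
    IntegrableOn (fun y : EuclideanSpace ℝ (Fin n) =>
      Real.sin (y ⟨0, hn⟩) ^ ℓ / ‖y‖ ^ ((n : ℝ) + α))
      {y : EuclideanSpace ℝ (Fin n) | r < ‖y‖} := by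
  have hs : MeasurableSet {y : EuclideanSpace ℝ (Fin n) | r < ‖y‖} :=
    (isOpen_lt continuous_const continuous_norm).measurableSet
  have hnr : (Module.finrank ℝ (EuclideanSpace ℝ (Fin n)) : ℝ) < (n : ℝ) + α := by
    rw [finrank_euclideanSpace_fin]; linarith
  refine Integrable.mono'
    (g := fun y : EuclideanSpace ℝ (Fin n) =>
      (1 + 1/r) ^ ((n:ℝ)+α) * (1 + ‖y‖) ^ (-((n:ℝ)+α)))
    (((integrable_one_add_norm hnr).const_mul _).integrableOn)
    ((aux_meas n hn ℓ α).aestronglyMeasurable.restrict) ?_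
  rw [ae_restrict_iff' hs]
  filter_upwards with y hy
  have h0 : 0 < ‖y‖ := hr.trans hy
  have hsℓ : |Real.sin (y ⟨0,hn⟩) ^ ℓ| ≤ 1 := by
    rw [abs_pow]; exact pow_le_one₀ (abs_nonneg _) (Real.abs_sin_le_one _)
  have hd : 0 < ‖y‖ ^ ((n:ℝ)+α) := Real.rpow_pos_of_pos h0 _
  rw [Real.norm_eq_abs, abs_div, abs_of_pos hd, Real.rpow_neg (by positivity)]
  have key : 1 + ‖y‖ ≤ (1 + 1/r) * ‖y‖ := by
    have h1 : 1 ≤ ‖y‖ / r := (one_le_div hr).2 hy.le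
    have h2 : (1 + 1/r) * ‖y‖ = ‖y‖/r + ‖y‖ := by field_simp; ring
    linarith
  calc |Real.sin (y ⟨0,hn⟩) ^ ℓ| / ‖y‖ ^ ((n:ℝ)+α) ≤ 1 / ‖y‖ ^ ((n:ℝ)+α) := by gcongr
    _ ≤ (1 + 1/r) ^ ((n:ℝ)+α) * ((1 + ‖y‖) ^ ((n:ℝ)+α))⁻¹ := by
        rw [← div_eq_mul_inv, div_le_div_iff₀ hd (Real.rpow_pos_of_pos (by positivity) _),
          one_mul, ← Real.mul_rpow (by positivity) (norm_nonneg _)]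
        exact Real.rpow_le_rpow (by positivity) key (by positivity)

section boxes
variable (n : ℕ) (hn : 0 < n) (r : ℝ)

/-- the `k`-th box -/
def box (k : ℕ) : Set (EuclideanSpace ℝ (Fin n)) :=
  (MeasurableEquiv.toLp 2 (Fin n → ℝ)).symm ⁻¹'
    (Set.univ.pi fun i => if i = (⟨0, hn⟩ : Fin n)
      then Set.Icc ((k:ℝ)*π + π/4) ((k:ℝ)*π + 3*π/4) else Set.Icc 0 r)

lemma mem_box {k : ℕ} {y : EuclideanSpace ℝ (Fin n)} :
    y ∈ box n hn r k ↔ (y ⟨0,hn⟩ ∈ Set.Icc ((k:ℝ)*π + π/4) ((k:ℝ)*π + 3*π/4)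
      ∧ ∀ i : Fin n, i ≠ ⟨0,hn⟩ → y i ∈ Set.Icc (0:ℝ) r) := by
  simp only [box, Set.mem_preimage, Set.mem_pi, Set.mem_univ, forall_true_left]
  constructor
  · intro h
    refine ⟨by simpa using h ⟨0,hn⟩, fun i hi => by simpa [hi] using h i⟩
  · intro ⟨h1, h2⟩ i
    by_cases hi : i = ⟨0,hn⟩
    · subst hi; simpa using h1
    · simpa [hi] using h2 i hi

lemma measurable_box (k : ℕ) : MeasurableSet (box n hn r k) :=
  (MeasurableEquiv.toLp 2 (Fin n → ℝ)).symm.measurable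
    (MeasurableSet.univ_pi (fun i => by split <;> exact measurableSet_Icc))

lemma volume_box (hr : 0 ≤ r) (k : ℕ) :
    volume (box n hn r k) = ENNReal.ofReal (π/2) * ENNReal.ofReal r ^ (n-1) := by
  rw [box, MeasurePreserving.measure_preimage
    (EuclideanSpace.volume_preserving_symm_measurableEquiv_toLp (Fin n))
    (MeasurableSet.univ_pi (fun i => by split <;> exact measurableSet_Icc)).nullMeasurableSet,
    volume_pi_pi]
  rw [Fintype.prod_eq_mul_prod_compl (⟨0,hn⟩ : Fin n)]
  rw [if_pos rfl, Real.volume_Icc]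
  congr 1
  · congr 1; ring
  · rw [Finset.prod_congr rfl (fun i hi => by
      rw [if_neg (by simpa using (Finset.mem_compl.1 hi))]),
      Finset.prod_const, Real.volume_Icc, sub_zero, Finset.card_compl,
      Finset.card_singleton, Fintype.card_fin]
end boxes

section boxes2
variable (n : ℕ) (hn : 0 < n) (r : ℝ)

lemma coord_le_norm (y : EuclideanSpace ℝ (Fin n)) (i : Fin n) : |y i| ≤ ‖y‖ := by
  rw [EuclideanSpace.norm_eq]
  calc |y i| = Real.sqrt (‖y i‖^2) := by
        rw [Real.sqrt_sq_eq_abs, Real.norm_eq_abs, abs_abs]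
    _ ≤ _ := Real.sqrt_le_sqrt (Finset.single_le_sum
        (f := fun j => ‖y j‖^2) (fun j _ => sq_nonneg _) (Finset.mem_univ i))

lemma norm_le_box {k : ℕ} {y : EuclideanSpace ℝ (Fin n)} (hy : y ∈ box n hn r k)
    (hr : 1 ≤ r) (hk : (k:ℝ)*π + 3*π/4 ≤ 13*r) : ‖y‖ ≤ 13*n*r := by
  have hpi := Real.pi_pos
  have hbd : ∀ i : Fin n, ‖y i‖ ≤ 13*r := by
    intro i
    rw [mem_box] at hy
    by_cases hi : i = ⟨0,hn⟩
    · subst hi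
      obtain ⟨⟨h1,h2⟩,_⟩ := hy
      rw [Real.norm_eq_abs, abs_le]
      constructor <;> nlinarith
    · obtain ⟨_,h2⟩ := hy
      obtain ⟨h3,h4⟩ := h2 i hi
      rw [Real.norm_eq_abs, abs_le]
      constructor <;> nlinarith
  rw [EuclideanSpace.norm_eq]
  have h1 : ∑ i, ‖y i‖^2 ≤ (13*n*r)^2 := by
    calc ∑ i, ‖y i‖^2 ≤ ∑ _i : Fin n, (13*r)^2 :=
          Finset.sum_le_sum (fun i _ => by
            have := hbd i; nlinarith [norm_nonneg (y i)])
      _ = n * (13*r)^2 := by rw [Finset.sum_const, Finset.card_univ, Fintype.card_fin]; ring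
      _ ≤ (13*n*r)^2 := by
          have h1n : (1:ℝ) ≤ n := by exact_mod_cast hn
          nlinarith
  calc Real.sqrt (∑ i, ‖y i‖^2) ≤ Real.sqrt ((13*n*r)^2) := Real.sqrt_le_sqrt h1
    _ = 13*n*r := by
        rw [Real.sqrt_sq (by positivity)]

lemma boxes_disj : Set.PairwiseDisjoint (Set.univ : Set ℕ) (box n hn r) := by
  intro a _ b _ hab
  have hpi := Real.pi_pos
  rw [Function.onFun, Set.disjoint_left]
  intro y hya hyb
  obtain ⟨⟨ha1, ha2⟩, _⟩ := (mem_box n hn r).1 hya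
  obtain ⟨⟨hb1, hb2⟩, _⟩ := (mem_box n hn r).1 hyb
  rcases hab.lt_or_gt with h | h
  · have : (a:ℝ) + 1 ≤ b := by exact_mod_cast h
    nlinarith
  · have : (b:ℝ) + 1 ≤ a := by exact_mod_cast h
    nlinarith
end boxes2

lemma key (n : ℕ) (hn : 0 < n) {ℓ : ℕ} (he : Even ℓ) {α : ℝ} (hα : 0 < α)
    {r : ℝ} (hr : 1 ≤ r) :
    (1/2:ℝ)^ℓ * (π/2) / ((13*n:ℝ))^((n:ℝ)+α) * r^(-α) ≤ W n hn ℓ α r := by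
  have hpi := Real.pi_pos
  have hpi4 := Real.pi_le_four
  have hr0 : (0:ℝ) < r := lt_of_lt_of_le one_pos hr
  set K : ℕ := ⌈r/π⌉₊ with hKdef
  set m : ℕ := ⌈r⌉₊ with hmdef
  have hm1 : r ≤ (m:ℝ) := Nat.le_ceil r
  have hm2 : (m:ℝ) < r + 1 := Nat.ceil_lt_add_one hr0.le
  have hK1 : r ≤ (K:ℝ)*π := by
    have := Nat.le_ceil (r/π)
    rw [div_le_iff₀ hpi] at this; exact this
  have hK2 : (K:ℝ)*π < r + π := by
    have h := Nat.ceil_lt_add_one (by positivity : (0:ℝ) ≤ r/π)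
    have h2 : (⌈r/π⌉₊:ℝ) * π < (r/π + 1) * π := mul_lt_mul_of_pos_right h hpi
    rwa [add_mul, div_mul_cancel₀ _ hpi.ne', one_mul] at h2
  set A : Set (EuclideanSpace ℝ (Fin n)) := ⋃ k ∈ Finset.Ico K (K+m), box n hn r k with hA
  have hmeasA : MeasurableSet A :=
    Finset.measurableSet_biUnion _ (fun k _ => measurable_box n hn r k)
  have hsub : A ⊆ {y : EuclideanSpace ℝ (Fin n) | r < ‖y‖} := by
    intro y hy
    rw [hA, Set.mem_iUnion₂] at hy
    obtain ⟨k, hk, hyk⟩ := hy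
    obtain ⟨⟨h1, _⟩, _⟩ := (mem_box n hn r).1 hyk
    have hKk : (K:ℝ) ≤ k := by exact_mod_cast (Finset.mem_Ico.1 hk).1
    have : r < y ⟨0,hn⟩ := by nlinarith
    calc r < y ⟨0,hn⟩ := this
      _ ≤ |y ⟨0,hn⟩| := le_abs_self _
      _ ≤ ‖y‖ := coord_le_norm n y _
  have hnormA : ∀ y ∈ A, ‖y‖ ≤ 13*n*r := by
    intro y hy
    rw [hA, Set.mem_iUnion₂] at hy
    obtain ⟨k, hk, hyk⟩ := hy
    have hkm : (k:ℝ) + 1 ≤ (K:ℝ) + m := by exact_mod_cast (Finset.mem_Ico.1 hk).2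
    refine norm_le_box n hn r hyk hr ?_
    nlinarith
  -- volume of A
  have hvol : volume A = (m : ℝ≥0∞) * (ENNReal.ofReal (π/2) * ENNReal.ofReal r ^ (n-1)) := by
    rw [hA, measure_biUnion_finset
      ((boxes_disj n hn r).subset (Set.subset_univ _))
      (fun k _ => measurable_box n hn r k)]
    rw [Finset.sum_congr rfl (fun k _ => volume_box n hn r hr0.le k),
      Finset.sum_const, Nat.card_Ico, Nat.add_sub_cancel_left, nsmul_eq_mul]
  have hvolne : volume A ≠ ⊤ := by
    rw [hvol]
    exact ENNReal.mul_ne_top (ENNReal.natCast_ne_top m)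
      (ENNReal.mul_ne_top ENNReal.ofReal_ne_top (by
        exact ENNReal.pow_ne_top ENNReal.ofReal_ne_top))
  have hvolR : (volume A).toReal = m * ((π/2) * r^(n-1)) := by
    rw [hvol, ENNReal.toReal_mul, ENNReal.toReal_natCast, ENNReal.toReal_mul,
      ENNReal.toReal_pow, ENNReal.toReal_ofReal (by positivity),
      ENNReal.toReal_ofReal hr0.le]
  set c₁ : ℝ := (1/2:ℝ)^ℓ / ((13*n*r:ℝ))^((n:ℝ)+α) with hc₁
  -- pointwise bound on A
  have hpt : ∀ y ∈ A, c₁ ≤ Real.sin (y ⟨0,hn⟩) ^ ℓ / ‖y‖ ^ ((n:ℝ)+α) := by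
    intro y hy
    have hy' := hsub hy
    have hy0 : (0:ℝ) < ‖y‖ := lt_trans hr0 hy'
    rw [hA, Set.mem_iUnion₂] at hy
    obtain ⟨k, hk, hyk⟩ := hy
    obtain ⟨hIcc, _⟩ := (mem_box n hn r).1 hyk
    rw [hc₁]
    apply div_le_div₀ (he.pow_nonneg _) (aux_sin he hIcc)
      (Real.rpow_pos_of_pos hy0 _)
    exact Real.rpow_le_rpow (norm_nonneg _) (hnormA y (by
      rw [hA, Set.mem_iUnion₂]; exact ⟨k, hk, hyk⟩)) (by positivity)
  -- integral bounds
  have hint := aux_int n hn ℓ hα hr0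
  have step1 : c₁ * (volume A).toReal ≤ W n hn ℓ α r := by
    calc c₁ * (volume A).toReal
        ≤ ∫ y in A, Real.sin (y ⟨0,hn⟩) ^ ℓ / ‖y‖ ^ ((n:ℝ)+α) :=
          setIntegral_ge_of_const_le_real hmeasA hvolne hpt (hint.mono_set hsub)
      _ ≤ W n hn ℓ α r := setIntegral_mono_set hint
          (Filter.Eventually.of_forall (aux_nonneg n hn he α))
          (HasSubset.Subset.eventuallyLE hsub)
  refine le_trans ?_ step1
  rw [hvolR, hc₁]
  have hrn : r * ((π/2) * r^(n-1)) = (π/2) * r^n := by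
    have : r * r^(n-1) = r^n := by
      rw [← pow_succ']; congr 1; omega
    rw [← this]; ring
  have e1 : ((13*n*r:ℝ))^((n:ℝ)+α) = ((13*n:ℝ))^((n:ℝ)+α) * (r^n * r^α) := by
    rw [Real.mul_rpow (by positivity) hr0.le, Real.rpow_add hr0, Real.rpow_natCast]
  have hposn : (0:ℝ) < ((13*n:ℝ))^((n:ℝ)+α) := Real.rpow_pos_of_pos (by positivity) _
  have hposα : (0:ℝ) < r^α := Real.rpow_pos_of_pos hr0 _
  have hposnn : (0:ℝ) < r^n := by positivity
  have heq : (1/2:ℝ)^ℓ / ((13*n*r:ℝ))^((n:ℝ)+α) * (r * ((π/2)*r^(n-1)))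
      = (1/2:ℝ)^ℓ * (π/2) / ((13*n:ℝ))^((n:ℝ)+α) * r^(-α) := by
    rw [e1, Real.rpow_neg hr0.le, hrn]
    field_simp
  calc (1/2:ℝ)^ℓ * (π/2) / ((13*n:ℝ))^((n:ℝ)+α) * r^(-α)
      = (1/2:ℝ)^ℓ / ((13*n*r:ℝ))^((n:ℝ)+α) * (r * ((π/2)*r^(n-1))) := heq.symm
    _ ≤ (1/2:ℝ)^ℓ / ((13*n*r:ℝ))^((n:ℝ)+α) * (m * ((π/2)*r^(n-1))) := by
        apply mul_le_mul_of_nonneg_left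
          (mul_le_mul_of_nonneg_right hm1 (by positivity)) (by positivity)

/-- For `n ≥ 1`, `ℓ` a positive even integer and `0 < α < ℓ`,
`inf_{r > 0} r^α W(r)/(1 − e^{−r})^α > 0`. -/
theorem stmt_16 (n : ℕ) (hn : 0 < n) (ℓ : ℕ) (hℓ : 0 < ℓ) (he : Even ℓ)
    (α : ℝ) (hα : 0 < α) (hαℓ : α < ℓ) :
    ∃ c : ℝ, 0 < c ∧ ∀ r : ℝ, 0 < r →
      c ≤ r ^ α * W n hn ℓ α r / (1 - Real.exp (-r)) ^ α := by
  have hpi := Real.pi_pos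
  refine ⟨(1/2:ℝ)^ℓ * (π/2) / ((13*n:ℝ))^((n:ℝ)+α), by positivity, ?_⟩
  set c₀ : ℝ := (1/2:ℝ)^ℓ * (π/2) / ((13*n:ℝ))^((n:ℝ)+α) with hc₀def
  have hc₀ : 0 < c₀ := by rw [hc₀def]; positivity
  intro r hr
  have hexp0 : Real.exp (-r) < 1 := Real.exp_lt_one_iff.2 (by linarith)
  have hexp1 : 0 < 1 - Real.exp (-r) := by linarith
  have hexp2 : 1 - Real.exp (-r) ≤ r := by nlinarith [Real.add_one_le_exp (-r)]
  have hexp3 : 1 - Real.exp (-r) ≤ 1 := by nlinarith [Real.exp_pos (-r)]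
  have hD : 0 < (1 - Real.exp (-r))^α := Real.rpow_pos_of_pos hexp1 α
  have hD1 : (1 - Real.exp (-r))^α ≤ 1 := Real.rpow_le_one hexp1.le hexp3 hα.le
  have hWnn : ∀ s : ℝ, 0 ≤ W n hn ℓ α s := fun s =>
    setIntegral_nonneg (isOpen_lt continuous_const continuous_norm).measurableSet
      (fun y _ => aux_nonneg n hn he α y)
  rcases le_or_gt 1 r with h1 | h1
  · have hkey := key n hn he hα h1
    have h2 : c₀ ≤ r^α * W n hn ℓ α r := by
      have h3 : r^α * (c₀ * r^(-α)) ≤ r^α * W n hn ℓ α r :=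
        mul_le_mul_of_nonneg_left hkey (Real.rpow_nonneg hr.le α)
      have h4 : r^α * (c₀ * r^(-α)) = c₀ := by
        rw [mul_comm c₀, ← mul_assoc, ← Real.rpow_add hr, add_neg_cancel,
          Real.rpow_zero, one_mul]
      linarith
    calc c₀ ≤ r^α * W n hn ℓ α r := h2
      _ = r^α * W n hn ℓ α r / 1 := (div_one _).symm
      _ ≤ r^α * W n hn ℓ α r / (1 - Real.exp (-r))^α := by
          apply div_le_div_of_nonneg_left ?_ hD hD1
          exact mul_nonneg (Real.rpow_nonneg hr.le α) (hWnn r)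
  · have hW1 : c₀ ≤ W n hn ℓ α 1 := by
      have := key n hn he hα (le_refl (1:ℝ))
      rwa [Real.one_rpow, mul_one] at this
    have hmono : W n hn ℓ α 1 ≤ W n hn ℓ α r := by
      apply setIntegral_mono_set (aux_int n hn ℓ hα hr)
        (Filter.Eventually.of_forall (aux_nonneg n hn he α))
      apply HasSubset.Subset.eventuallyLE
      intro y hy
      exact lt_trans h1 hy
    have hrα : 0 < r^α := Real.rpow_pos_of_pos hr α
    have hle : (1 - Real.exp (-r))^α ≤ r^α :=
      Real.rpow_le_rpow hexp1.le hexp2 hα.le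
    calc c₀ ≤ W n hn ℓ α r := le_trans hW1 hmono
      _ = r^α * W n hn ℓ α r / r^α := by field_simp
      _ ≤ r^α * W n hn ℓ α r / (1 - Real.exp (-r))^α := by
          apply div_le_div_of_nonneg_left ?_ hD hle
          exact mul_nonneg hrα.le (hWnn r)
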